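/- arXiv:1211.0678 — 6 statements merged into one kernel-verified Lean document; each statement's English description precedes it below -/
import Mathlib

section
/- Let U > 0, ℓ > 0, γ ∈ ℝ, and for k ≥ 1 let λ_k = (2π⌈k/2⌉/ℓ)² be the nonzero eigenvalues of -D_yy on ℓ-periodic functions (so λ_1 = 4π²/ℓ²), and a_k = (U² - X_k²)(X_k² - γU²)/(4UX_k) with X_k = √(U² + 4λ_k). Then a_k < 0 for every k ≥ 1 if and only if γ < γ_c := 1 + 16π²/(ℓ²U²). -/
theorem stmt4 (U ℓ γ : ℝ) (hU : 0 < U) (hℓ : 0 < ℓ)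
    (lam X a : ℕ → ℝ)
    (hlam : ∀ k, lam k = (2 * Real.pi * (⌈(k : ℝ) / 2⌉ : ℝ) / ℓ) ^ 2)
    (hX : ∀ k, X k = Real.sqrt (U ^ 2 + 4 * lam k))
    (ha : ∀ k, a k = (U ^ 2 - (X k) ^ 2) * ((X k) ^ 2 - γ * U ^ 2) / (4 * U * X k)) :
    (∀ k ≥ 1, a k < 0) ↔ γ < 1 + 16 * Real.pi ^ 2 / (ℓ ^ 2 * U ^ 2) := by
  have hπ := Real.pi_pos
  have hU2 : (0:ℝ) < U ^ 2 := by positivity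
  have hlam_ge : ∀ k ≥ 1, 4 * Real.pi ^ 2 / ℓ ^ 2 ≤ lam k := by
    intro k hk
    rw [hlam]
    have h1 : (1:ℝ) ≤ (⌈(k : ℝ) / 2⌉ : ℝ) := by
      have hk' : (1:ℝ) ≤ (k : ℝ) := by exact_mod_cast hk
      have hz : (0:ℤ) < ⌈(k : ℝ) / 2⌉ := Int.ceil_pos.mpr (by linarith)
      have hz' : (1:ℤ) ≤ ⌈(k : ℝ) / 2⌉ := hz
      exact_mod_cast hz'
    have h2 : 2 * Real.pi / ℓ ≤ 2 * Real.pi * (⌈(k : ℝ) / 2⌉ : ℝ) / ℓ := by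
      rw [div_le_div_iff₀ hℓ hℓ]
      nlinarith [mul_le_mul_of_nonneg_left h1 (by positivity : (0:ℝ) ≤ 2 * Real.pi * ℓ)]
    have h3 : (2 * Real.pi / ℓ) ^ 2 ≤ (2 * Real.pi * (⌈(k : ℝ) / 2⌉ : ℝ) / ℓ) ^ 2 := by
      apply pow_le_pow_left₀ (by positivity) h2
    calc 4 * Real.pi ^ 2 / ℓ ^ 2 = (2 * Real.pi / ℓ) ^ 2 := by ring
      _ ≤ _ := h3
  have hlampos : ∀ k ≥ 1, 0 < lam k := fun k hk =>
    lt_of_lt_of_le (by positivity) (hlam_ge k hk)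
  have hX2 : ∀ k ≥ 1, (X k) ^ 2 = U ^ 2 + 4 * lam k := by
    intro k hk
    rw [hX]
    exact Real.sq_sqrt (by nlinarith [hlampos k hk])
  have hXpos : ∀ k ≥ 1, 0 < X k := by
    intro k hk
    rw [hX]
    exact Real.sqrt_pos.mpr (by nlinarith [hlampos k hk])
  have key : ∀ k ≥ 1, (a k < 0 ↔ γ < 1 + 4 * lam k / U ^ 2) := by
    intro k hk
    have hx2 := hX2 k hk
    have hxp := hXpos k hk
    have hLp := hlampos k hk
    have hden : 0 < 4 * U * X k := by positivity
    have hnum1 : U ^ 2 - (X k) ^ 2 < 0 := by nlinarith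
    have heq : 1 + 4 * lam k / U ^ 2 = (U ^ 2 + 4 * lam k) / U ^ 2 := by
      field_simp
    rw [ha, div_neg_iff, heq, lt_div_iff₀ hU2]
    constructor
    · rintro (⟨h1, h2⟩ | ⟨h1, h2⟩)
      · linarith
      · nlinarith
    · intro hγ
      right
      exact ⟨mul_neg_of_neg_of_pos hnum1 (by nlinarith), hden⟩
  have hlam1 : lam 1 = 4 * Real.pi ^ 2 / ℓ ^ 2 := by
    rw [hlam]
    have hc : (⌈((1:ℕ) : ℝ) / 2⌉ : ℤ) = 1 := by
      push_cast
      rw [Int.ceil_eq_iff]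
      norm_num
    rw [hc]
    push_cast
    ring
  have heq2 : 4 * (4 * Real.pi ^ 2 / ℓ ^ 2) / U ^ 2 = 16 * Real.pi ^ 2 / (ℓ ^ 2 * U ^ 2) := by
    field_simp
    ring
  constructor
  · intro h
    have h1 := (key 1 le_rfl).mp (h 1 le_rfl)
    rw [hlam1] at h1
    linarith [heq2]
  · intro hγ k hk
    apply (key k hk).mpr
    have hge := hlam_ge k hk
    have : 4 * (4 * Real.pi ^ 2 / ℓ ^ 2) / U ^ 2 ≤ 4 * lam k / U ^ 2 := by
      gcongr
    linarith [heq2]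
end

section
/- For every ε ∈ (0,1] and k ≥ 0, with X = X_{ε,k} = √(1 + 4ελ_k), the symbol m_{ε,k} = (4ε)⁻¹(X³ - 3X² - 4(1+ε)X + 6 + 4ε) satisfies |m_{ε,k}| ≤ 2λ_k^{3/2} + 25λ_k. -/
theorem stmt9 (ε lam : ℝ) (hε : ε ∈ Set.Ioc (0:ℝ) 1) (hlam : 0 ≤ lam)
    (X : ℝ) (hX : X = Real.sqrt (1 + 4 * ε * lam)) :
    |(4 * ε)⁻¹ * (X ^ 3 - 3 * X ^ 2 - 4 * (1 + ε) * X + 6 + 4 * ε)|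
      ≤ 2 * lam ^ ((3:ℝ)/2) + 25 * lam := by
  obtain ⟨hε0, hε1⟩ := hε
  set L := Real.sqrt lam with hL
  have hL0 : 0 ≤ L := Real.sqrt_nonneg _
  have hL2 : L ^ 2 = lam := Real.sq_sqrt hlam
  have hrw : lam ^ ((3:ℝ)/2) = L ^ 3 := by
    rw [hL, ← Real.rpow_natCast (Real.sqrt lam) 3, Real.sqrt_eq_rpow,
      ← Real.rpow_mul hlam]
    norm_num
  have h1 : (0:ℝ) ≤ 1 + 4 * ε * lam := by positivity
  have hX2 : X ^ 2 = 1 + 4 * ε * lam := by rw [hX]; exact Real.sq_sqrt h1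
  have hXnn : 0 ≤ X := by rw [hX]; positivity
  have hX1 : 1 ≤ X := by nlinarith [hX2, mul_nonneg hε0.le hlam]
  have hXle : X ≤ 1 + 2 * L := by nlinarith [hX2, hL2]
  have hX1p : (0:ℝ) < X + 1 := by linarith
  have hXm : (X - 1) * (X + 1) = 4 * ε * lam := by linear_combination hX2
  have key : (4 * ε)⁻¹ * (X ^ 3 - 3 * X ^ 2 - 4 * (1 + ε) * X + 6 + 4 * ε)
      = lam * (X ^ 2 - 2 * X - 6 - 4 * ε) / (X + 1) := by
    rw [eq_div_iff hX1p.ne', inv_mul_eq_div, div_mul_eq_mul_div,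
      div_eq_iff (by positivity : (4:ℝ) * ε ≠ 0)]
    linear_combination (X ^ 2 - 2 * X - 6 - 4 * ε) * hXm
  rw [key, hrw, abs_div, abs_of_pos hX1p, div_le_iff₀ hX1p, abs_mul,
    abs_of_nonneg hlam]
  have hN : |X ^ 2 - 2 * X - 6 - 4 * ε| ≤ (X + 7) * (X + 1) := by
    rw [abs_le]; constructor <;> nlinarith
  have h8 : lam * (X + 7) ≤ 2 * L ^ 3 + 25 * lam := by
    nlinarith [mul_le_mul_of_nonneg_left hXle hlam, hL2, hL0,
      mul_nonneg hlam hL0]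
  calc lam * |X ^ 2 - 2 * X - 6 - 4 * ε| ≤ lam * ((X + 7) * (X + 1)) :=
        mul_le_mul_of_nonneg_left hN hlam
    _ ≤ (2 * L ^ 3 + 25 * lam) * (X + 1) := by
        rw [← mul_assoc]; exact mul_le_mul_of_nonneg_right h8 hX1p.le
end

section
/- Let ε ∈ (0,1], and with X = √(1+4ελ) for λ ≥ 0, set f_ε(λ) = (1/4)(X³ - 3X² - 4(1+ε)X + 4 + 4ε). Then there is an absolute constant c > 0 (independent of ε and λ) such that |f_ε(λ)| ≤ c(ε^{3/2}λ^{3/2} + ελ + ε^{1/2}λ^{1/2} + 1) for all λ ≥ 0 and ε ∈ (0,1]. -/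
theorem stmt10 :
    ∃ c > (0:ℝ), ∀ ε ∈ Set.Ioc (0:ℝ) 1, ∀ lam ≥ (0:ℝ),
      |(1/4) * ((Real.sqrt (1 + 4 * ε * lam)) ^ 3
          - 3 * (Real.sqrt (1 + 4 * ε * lam)) ^ 2
          - 4 * (1 + ε) * Real.sqrt (1 + 4 * ε * lam) + 4 + 4 * ε)|
        ≤ c * (ε ^ ((3:ℝ)/2) * lam ^ ((3:ℝ)/2) + ε * lam
            + ε ^ ((1:ℝ)/2) * lam ^ ((1:ℝ)/2) + 1) := by
  refine ⟨10, by norm_num, ?_⟩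
  intro ε hε lam hlam
  obtain ⟨hε0, hε1⟩ := hε
  have hεl : (0:ℝ) ≤ ε * lam := mul_nonneg hε0.le hlam
  set s := Real.sqrt (ε * lam) with hs
  have hs0 : 0 ≤ s := Real.sqrt_nonneg _
  have hs2 : s ^ 2 = ε * lam := Real.sq_sqrt hεl
  set X := Real.sqrt (1 + 4 * ε * lam) with hXdef
  have hX0 : 0 ≤ X := Real.sqrt_nonneg _
  have hX2 : X ^ 2 = 1 + 4 * ε * lam := Real.sq_sqrt (by nlinarith)
  have hX1 : 1 ≤ X := by
    rw [show (1:ℝ) = Real.sqrt 1 by simp]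
    exact Real.sqrt_le_sqrt (by nlinarith)
  have hX : X ≤ 1 + 2 * s := by
    have : (1 + 4 * ε * lam) ≤ (1 + 2 * s) ^ 2 := by nlinarith
    calc X ≤ Real.sqrt ((1 + 2 * s) ^ 2) := Real.sqrt_le_sqrt this
    _ = 1 + 2 * s := Real.sqrt_sq (by linarith)
  have h12 : ε ^ ((1:ℝ)/2) * lam ^ ((1:ℝ)/2) = s := by
    rw [hs, Real.sqrt_eq_rpow, ← Real.mul_rpow hε0.le hlam]
  have h32 : ε ^ ((3:ℝ)/2) * lam ^ ((3:ℝ)/2) = s ^ 3 := by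
    rw [hs, Real.sqrt_eq_rpow, ← Real.mul_rpow hε0.le hlam,
      ← Real.rpow_natCast ((ε*lam) ^ ((1:ℝ)/2)) 3, ← Real.rpow_mul hεl]
    norm_num
  rw [h12, h32, ← hs2]
  rw [abs_le]
  constructor <;> nlinarith [sq_nonneg (X - 1), sq_nonneg s, sq_nonneg (s - 1),
    sq_nonneg (s + 1), mul_nonneg hs0 hs0, mul_nonneg (mul_nonneg hs0 hs0) hs0,
    mul_nonneg hX0 hs0, sq_nonneg (X - 1 - 2*s)]
end

section
/- Let c₀, c₁, c₂, c₃, T₀ > 0 and 0 < T₁ < T₀, ε > 0. Suppose f_ε : [0,T₁] → ℝ is continuous nonnegative, A_ε : [0,T₁] → ℝ is C¹ nonnegative with A_ε(0) = 0, and A_ε'(τ) + (c₀ - ε²A_ε(τ)²) f_ε(τ) ≤ c₁ + c₂A_ε(τ) + c₃εA_ε(τ)² for all τ ∈ [0,T₁]. Then there exist ε₁ = ε₁(T₀, c₀, c₁, c₂, c₃) ∈ (0,1) and K = K(T₀, c₁, c₂) > 0, both independent of T₁ and ε, such that A_ε(τ) ≤ K for all τ ∈ [0,T₁] whenever 0 <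 ε ≤ ε₁. In fact one may take K = 4c₁e^{c₂T₀}/(3c₂). -/
open Set Real

theorem stmt11 (c₀ c₁ c₂ c₃ T₀ : ℝ)
    (hc₀ : 0 < c₀) (hc₁ : 0 < c₁) (hc₂ : 0 < c₂) (hc₃ : 0 < c₃) (hT₀ : 0 < T₀) :
    ∃ ε₁ ∈ Set.Ioo (0:ℝ) 1,
      ∀ ε T₁ : ℝ, ∀ f A : ℝ → ℝ, 0 < ε → ε ≤ ε₁ → 0 < T₁ → T₁ < T₀ →
        ContinuousOn f (Set.Icc 0 T₁) →
        (∀ τ ∈ Set.Icc 0 T₁, 0 ≤ f τ) →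
        (∀ τ ∈ Set.Icc 0 T₁, 0 ≤ A τ) →
        A 0 = 0 →
        (∀ τ ∈ Set.Icc 0 T₁, HasDerivAt A (deriv A τ) τ) →
        ContinuousOn (deriv A) (Set.Icc 0 T₁) →
        (∀ τ ∈ Set.Icc 0 T₁,
          deriv A τ + (c₀ - ε ^ 2 * (A τ) ^ 2) * f τ
            ≤ c₁ + c₂ * A τ + c₃ * ε * (A τ) ^ 2) →
        ∀ τ ∈ Set.Icc 0 T₁, A τ ≤ 4 * c₁ * Real.exp (c₂ * T₀) / (3 * c₂) := by
  set B : ℝ := 4 * c₁ * Real.exp (c₂ * T₀) / (3 * c₂) with hBdef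
  have hBpos : 0 < B := by
    apply div_pos _ (by linarith)
    positivity
  refine ⟨min (min (1/2) (Real.sqrt c₀ / B)) (c₁ / (4 * c₃ * B ^ 2)), ⟨?_, ?_⟩, ?_⟩
  · apply lt_min (lt_min (by norm_num) _) _
    · exact div_pos (Real.sqrt_pos.2 hc₀) hBpos
    · positivity
  · calc min (min (1/2) (Real.sqrt c₀ / B)) (c₁ / (4 * c₃ * B ^ 2))
        ≤ min (1/2) (Real.sqrt c₀ / B) := min_le_left _ _
      _ ≤ 1/2 := min_le_left _ _
      _ < 1 := by norm_num
  intro ε T₁ f A hε hεle hT₁ hT₁T₀ hfc hf0 hApos hA0 hAd hAdc hineq τ hτ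
  by_contra hcon
  push_neg at hcon
  -- continuity of A on Icc 0 T₁
  have hAc : ContinuousOn A (Icc 0 T₁) :=
    fun x hx => ((hAd x hx).continuousAt).continuousWithinAt
  -- the hitting set
  set S : Set ℝ := Icc 0 T₁ ∩ A ⁻¹' Ici B with hSdef
  have hSne : S.Nonempty := ⟨τ, hτ, le_of_lt hcon⟩
  have hSclosed : IsClosed S :=
    hAc.preimage_isClosed_of_isClosed isClosed_Icc isClosed_Ici
  have hSbdd : BddBelow S := ⟨0, fun x hx => hx.1.1⟩
  set t : ℝ := sInf S with htdef
  have htS : t ∈ S := hSclosed.csInf_mem hSne hSbdd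
  have htIcc : t ∈ Icc 0 T₁ := htS.1
  have htB : B ≤ A t := htS.2
  -- below t, A < B
  have hlt : ∀ x ∈ Ico (0:ℝ) t, A x < B := by
    intro x hx
    by_contra hle
    push_neg at hle
    have : x ∈ S := ⟨⟨hx.1, le_trans hx.2.le htIcc.2⟩, hle⟩
    exact absurd (csInf_le hSbdd this) (not_le.2 hx.2)
  -- epsilon facts
  have hε1 : ε ≤ Real.sqrt c₀ / B :=
    le_trans hεle (le_trans (min_le_left _ _) (min_le_right _ _))
  have hε2 : ε ≤ c₁ / (4 * c₃ * B ^ 2) := le_trans hεle (min_le_right _ _)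
  -- Gronwall bound on [0, t]
  have hbound : ∀ x ∈ Ico (0:ℝ) t, deriv A x ≤ c₂ * A x + 5/4 * c₁ := by
    intro x hx
    have hxIcc : x ∈ Icc 0 T₁ := ⟨hx.1, le_trans hx.2.le htIcc.2⟩
    have h1 := hineq x hxIcc
    have hAx : 0 ≤ A x := hApos x hxIcc
    have hAxB : A x ≤ B := (hlt x hx).le
    have hεA : ε * A x ≤ Real.sqrt c₀ := by
      calc ε * A x ≤ ε * B := by nlinarith
        _ ≤ (Real.sqrt c₀ / B) * B := by nlinarith
        _ = Real.sqrt c₀ := div_mul_cancel₀ _ hBpos.ne'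
    have hεA2 : ε ^ 2 * A x ^ 2 ≤ c₀ := by
      have h := mul_self_le_mul_self (by positivity) hεA
      rw [Real.mul_self_sqrt hc₀.le] at h
      nlinarith
    have hdis : 0 ≤ (c₀ - ε ^ 2 * A x ^ 2) * f x :=
      mul_nonneg (by linarith) (hf0 x hxIcc)
    have hcub : c₃ * ε * A x ^ 2 ≤ c₁ / 4 := by
      have hA2 : A x ^ 2 ≤ B ^ 2 := by nlinarith
      have h5 : ε * (4 * c₃ * B ^ 2) ≤ c₁ := by
        rw [← le_div_iff₀ (by positivity)]; exact hε2
      have h3 : c₃ * ε * A x ^ 2 ≤ c₃ * ε * B ^ 2 :=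
        mul_le_mul_of_nonneg_left hA2 (mul_nonneg hc₃.le hε.le)
      have h4 : c₃ * ε * B ^ 2 ≤ c₁ / 4 := by
        calc c₃ * ε * B ^ 2 = ε * (4 * c₃ * B ^ 2) / 4 := by ring
          _ ≤ c₁ / 4 := by linarith
      linarith
    linarith
  have hslope : ∀ x ∈ Ico (0:ℝ) t, ∀ r, deriv A x < r →
      ∃ᶠ z in nhdsWithin x (Ioi x), (z - x)⁻¹ * (A z - A x) < r := by
    intro x hx r hr
    exact ((hAd x ⟨hx.1, le_trans hx.2.le htIcc.2⟩).hasDerivWithinAt).liminf_right_slope_le hr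
  have hG := le_gronwallBound_of_liminf_deriv_right_le
    (f := A) (f' := deriv A) (δ := 0) (K := c₂) (ε := 5/4 * c₁) (a := 0) (b := t)
    (hAc.mono (Icc_subset_Icc le_rfl htIcc.2)) hslope (le_of_eq hA0) hbound
  have hAt := hG t ⟨htIcc.1, le_rfl⟩
  rw [sub_zero, gronwallBound_of_K_ne_0 hc₂.ne'] at hAt
  have he : Real.exp (c₂ * t) ≤ Real.exp (c₂ * T₀) := by
    apply Real.exp_le_exp.2
    have : t ≤ T₀ := le_trans htIcc.2 hT₁T₀.le
    nlinarith
  have hepos : (0:ℝ) < Real.exp (c₂ * t) := Real.exp_pos _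
  have hfin : 0 * Real.exp (c₂ * t) + 5/4 * c₁ / c₂ * (Real.exp (c₂ * t) - 1) < B := by
    rw [hBdef, zero_mul, zero_add, div_mul_eq_mul_div, div_lt_div_iff₀ hc₂ (by linarith)]
    have p : 0 < c₁ * c₂ := mul_pos hc₁ hc₂
    have q : Real.exp (c₂ * t) - 1 < Real.exp (c₂ * T₀) := by linarith
    have h5 : c₁ * c₂ * (Real.exp (c₂ * t) - 1) < c₁ * c₂ * Real.exp (c₂ * T₀) :=
      mul_lt_mul_of_pos_left q p
    have h6 : 0 < c₁ * c₂ * Real.exp (c₂ * T₀) := mul_pos p (Real.exp_pos _)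
    linarith
  linarith
end

section
/- Let c₁, c₂, c₃ > 0, T₀ > 0 and 0 < ε ≤ 3c₂²/(16c₁c₃(e^{c₂T₀} - 1)). If A : [0,T₁] → ℝ (T₁ ≤ T₀) is C¹, nonnegative, A(0) = 0, and A'(τ) ≤ c₁ + c₂A(τ) + c₃εA(τ)² on [0,T₁], then A(τ) ≤ 4c₁e^{c₂T₀}/(3c₂) for all τ ∈ [0,T₁]. -/
/-!
Let `g = gronwallBound 0 a c` solve `g' = a g + c`, `g 0 = 0`. For `c > c₁` and `0 ≤ k g < 1`,
`g / (1 - k g)` is a strict supersolution of `y' = c₁ + a y + k a y²`: its derivative is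
`(a g + c) / (1 - k g)²`, while the right-hand side evaluated on it is
`(c₁ (1 - k g)² + a g) / (1 - k g)²`. By the comparison principle `A ≤ g / (1 - k g)`, which is at
most `4/3 · g` while `k g ≤ 1/4`. With `a = c₂` and `k = c₃ ε / c₂`, the smallness assumption on `ε`
says precisely that `k g(T₀) ≤ 1/4` for `c = 4c₁/3`; taking `c` closer to `c₁` also gives
`c (e^{c₂T₀} - 1) ≤ c₁ e^{c₂T₀}`, which turns `4/3 · g(T₀)` into the stated bound.
-/

open Real Set

theorem HasDerivAt.div_one_sub_const_mul {u : ℝ → ℝ} {u' k x : ℝ} (hu : HasDerivAt u u' x)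
    (hx : 1 - k * u x ≠ 0) :
    HasDerivAt (fun y => u y / (1 - k * u y)) (u' / (1 - k * u x) ^ 2) x :=
  (hu.div ((hu.const_mul k).const_sub 1) hx).congr_deriv (by ring)

theorem riccati_rhs_div_one_sub_lt {c₁ c a k b : ℝ} (hc₁ : 0 ≤ c₁) (hc : c₁ < c)
    (hkb : 0 ≤ k * b) (hkb₁ : k * b < 1) :
    c₁ + a * (b / (1 - k * b)) + k * a * (b / (1 - k * b)) ^ 2 < (a * b + c) / (1 - k * b) ^ 2 := by
  have hpos : 0 < 1 - k * b := by linarith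
  have hsq : (1 - k * b) ^ 2 ≤ 1 := by nlinarith
  have hnum : (c₁ + a * (b / (1 - k * b)) + k * a * (b / (1 - k * b)) ^ 2) * (1 - k * b) ^ 2
      = c₁ * (1 - k * b) ^ 2 + a * b := by
    have hkb' : k * b = 1 - (1 - k * b) := by ring
    generalize 1 - k * b = y at hpos hkb' ⊢
    field_simp
    linear_combination (a * b) * hkb'
  rw [lt_div_iff₀ (by positivity), hnum]
  nlinarith

theorem gronwallBound_zero_of_ne_zero {K : ℝ} (hK : K ≠ 0) (ε x : ℝ) :
    gronwallBound 0 K ε x = ε / K * (exp (K * x) - 1) := by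
  simp [gronwallBound_of_K_ne_0 hK]

theorem gronwallBound_zero_nonneg {K ε x : ℝ} (hK : 0 ≤ K) (hε : 0 ≤ ε) (hx : 0 ≤ x) :
    0 ≤ gronwallBound 0 K ε x := by
  simpa [gronwallBound_x0] using gronwallBound_mono le_rfl hε hK hx

theorem le_riccati_supersolution {A A' : ℝ → ℝ} {c₁ c a k T : ℝ} (hc₁ : 0 ≤ c₁) (hc : c₁ < c)
    (ha : 0 ≤ a) (hk : 0 ≤ k) (hsmall : k * gronwallBound 0 a c T < 1) (hA0 : A 0 ≤ 0)
    (hA : ∀ τ ∈ Icc 0 T, HasDerivAt A (A' τ) τ)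
    (hineq : ∀ τ ∈ Icc 0 T, A' τ ≤ c₁ + a * A τ + k * a * A τ ^ 2) :
    ∀ τ ∈ Icc 0 T,
      A τ ≤ gronwallBound 0 a c τ / (1 - k * gronwallBound 0 a c τ) := by
  set g := gronwallBound 0 a c
  have hc₀ : 0 ≤ c := hc₁.trans hc.le
  have hkg : ∀ τ ∈ Icc 0 T, 0 ≤ k * g τ ∧ k * g τ < 1 := fun τ hτ =>
    ⟨mul_nonneg hk (gronwallBound_zero_nonneg ha hc₀ hτ.1),
      (mul_le_mul_of_nonneg_left (gronwallBound_mono le_rfl hc₀ ha hτ.2) hk).trans_lt hsmall⟩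
  have hS : ∀ τ ∈ Icc 0 T,
      HasDerivAt (fun y => g y / (1 - k * g y)) ((a * g τ + c) / (1 - k * g τ) ^ 2) τ :=
    fun τ hτ => (hasDerivAt_gronwallBound 0 a c τ).div_one_sub_const_mul
      (by linarith [hkg τ hτ])
  refine image_le_of_deriv_right_lt_deriv_boundary'
    (fun τ hτ => (hA τ hτ).continuousAt.continuousWithinAt)
    (fun τ hτ => (hA τ (Ico_subset_Icc_self hτ)).hasDerivWithinAt)
    (by simpa [g, gronwallBound_x0] using hA0)
    (fun τ hτ => (hS τ hτ).continuousAt.continuousWithinAt)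
    (fun τ hτ => (hS τ (Ico_subset_Icc_self hτ)).hasDerivWithinAt) ?_
  intro τ hτ hAS
  obtain ⟨hkg₀, hkg₁⟩ := hkg τ (Ico_subset_Icc_self hτ)
  calc A' τ ≤ c₁ + a * A τ + k * a * A τ ^ 2 := hineq τ (Ico_subset_Icc_self hτ)
    _ < (a * g τ + c) / (1 - k * g τ) ^ 2 := hAS ▸ riccati_rhs_div_one_sub_lt hc₁ hc hkg₀ hkg₁

theorem le_four_thirds_gronwallBound {A A' : ℝ → ℝ} {c₁ c a k T : ℝ} (hc₁ : 0 ≤ c₁)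
    (hc : c₁ < c) (ha : 0 ≤ a) (hk : 0 ≤ k) (hsmall : k * gronwallBound 0 a c T ≤ 1 / 4)
    (hA0 : A 0 ≤ 0) (hA : ∀ τ ∈ Icc 0 T, HasDerivAt A (A' τ) τ)
    (hineq : ∀ τ ∈ Icc 0 T, A' τ ≤ c₁ + a * A τ + k * a * A τ ^ 2) :
    ∀ τ ∈ Icc 0 T, A τ ≤ 4 / 3 * gronwallBound 0 a c T := by
  intro τ hτ
  set g := gronwallBound 0 a c
  have hc₀ : 0 ≤ c := hc₁.trans hc.le
  have hgτ : 0 ≤ g τ := gronwallBound_zero_nonneg ha hc₀ hτ.1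
  have hgτT : g τ ≤ g T := gronwallBound_mono le_rfl hc₀ ha hτ.2
  have hkgτ : k * g τ ≤ 1 / 4 := (mul_le_mul_of_nonneg_left hgτT hk).trans hsmall
  calc A τ ≤ g τ / (1 - k * g τ) :=
        le_riccati_supersolution hc₁ hc ha hk (by linarith) hA0 hA hineq τ hτ
    _ ≤ 4 / 3 * g τ := by
        rw [div_le_iff₀ (by linarith)]
        nlinarith
    _ ≤ 4 / 3 * g T := by linarith

theorem exists_gt_le_four_thirds_mul_sub_one_le {c₁ E : ℝ} (hc₁ : 0 < c₁) (hE : 1 < E) :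
    ∃ c, c₁ < c ∧ c ≤ 4 * c₁ / 3 ∧ c * (E - 1) ≤ c₁ * E := by
  have hE₁ : 0 < E - 1 := by linarith
  refine ⟨min (4 * c₁ / 3) (c₁ * E / (E - 1)), ?_, min_le_left _ _,
    (le_div_iff₀ hE₁).mp (min_le_right _ _)⟩
  exact lt_min (by linarith) ((lt_div_iff₀ hE₁).mpr (by linarith))

theorem stmt12_general (c₁ c₂ c₃ T₀ T₁ ε : ℝ)
    (hc₁ : 0 < c₁) (hc₂ : 0 < c₂) (hc₃ : 0 < c₃) (hT₀ : 0 < T₀)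
    (hT₁T₀ : T₁ ≤ T₀)
    (hε : 0 < ε)
    (hεle : ε ≤ 3 * c₂ ^ 2 / (16 * c₁ * c₃ * (Real.exp (c₂ * T₀) - 1)))
    (A : ℝ → ℝ)
    (hA0 : A 0 = 0)
    (hAdiff : ∀ τ ∈ Set.Icc 0 T₁, HasDerivAt A (deriv A τ) τ)
    (hineq : ∀ τ ∈ Set.Icc 0 T₁,
      deriv A τ ≤ c₁ + c₂ * A τ + c₃ * ε * (A τ) ^ 2) :
    ∀ τ ∈ Set.Icc 0 T₁, A τ ≤ 4 * c₁ * Real.exp (c₂ * T₀) / (3 * c₂) := by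
  set E := exp (c₂ * T₀)
  have hE : 1 < E := one_lt_exp_iff.mpr (mul_pos hc₂ hT₀)
  obtain ⟨c, hc, hc43, hcE⟩ := exists_gt_le_four_thirds_mul_sub_one_le hc₁ hE
  have hk : 0 ≤ c₃ * ε / c₂ := by positivity
  have hsmall : c₃ * ε / c₂ * gronwallBound 0 c₂ c T₀ ≤ 1 / 4 := by
    have hE₁ : 0 < E - 1 := sub_pos.mpr hE
    have hε' : ε * (16 * c₁ * c₃ * (E - 1)) ≤ 3 * c₂ ^ 2 :=
      (le_div_iff₀ (by positivity)).mp hεle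
    have hc43' : c₃ * ε * (E - 1) * c ≤ c₃ * ε * (E - 1) * (4 * c₁ / 3) :=
      mul_le_mul_of_nonneg_left hc43 (by positivity)
    rw [gronwallBound_zero_of_ne_zero hc₂.ne', show c₃ * ε / c₂ * (c / c₂ * (E - 1))
      = c₃ * ε * (E - 1) * c / c₂ ^ 2 by ring, div_le_iff₀ (by positivity)]
    nlinarith
  have hmono : gronwallBound 0 c₂ c T₁ ≤ gronwallBound 0 c₂ c T₀ :=
    gronwallBound_mono le_rfl (by linarith) hc₂.le hT₁T₀
  have hineq' : ∀ τ ∈ Icc 0 T₁, deriv A τ ≤ c₁ + c₂ * A τ + c₃ * ε / c₂ * c₂ * A τ ^ 2 := by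
    simpa only [div_mul_cancel₀ _ hc₂.ne'] using hineq
  intro τ hτ
  calc A τ ≤ 4 / 3 * gronwallBound 0 c₂ c T₁ :=
        le_four_thirds_gronwallBound hc₁.le hc hc₂.le hk
          ((mul_le_mul_of_nonneg_left hmono hk).trans hsmall) hA0.le hAdiff hineq' τ hτ
    _ ≤ 4 / 3 * (c / c₂ * (E - 1)) := by
        rw [← gronwallBound_zero_of_ne_zero hc₂.ne']
        linarith
    _ ≤ 4 * c₁ * E / (3 * c₂) := by
        rw [le_div_iff₀ (by positivity)]
        field_simp
        linarith

theorem stmt12 (c₁ c₂ c₃ T₀ T₁ ε : ℝ)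
    (hc₁ : 0 < c₁) (hc₂ : 0 < c₂) (hc₃ : 0 < c₃) (hT₀ : 0 < T₀)
    (hT₁ : 0 < T₁) (hT₁T₀ : T₁ ≤ T₀)
    (hε : 0 < ε)
    (hεle : ε ≤ 3 * c₂ ^ 2 / (16 * c₁ * c₃ * (Real.exp (c₂ * T₀) - 1)))
    (A : ℝ → ℝ)
    (hA0 : A 0 = 0)
    (hApos : ∀ τ ∈ Set.Icc 0 T₁, 0 ≤ A τ)
    (hAdiff : ∀ τ ∈ Set.Icc 0 T₁, HasDerivAt A (deriv A τ) τ)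
    (hAcont : ContinuousOn (deriv A) (Set.Icc 0 T₁))
    (hineq : ∀ τ ∈ Set.Icc 0 T₁,
      deriv A τ ≤ c₁ + c₂ * A τ + c₃ * ε * (A τ) ^ 2) :
    ∀ τ ∈ Set.Icc 0 T₁, A τ ≤ 4 * c₁ * Real.exp (c₂ * T₀) / (3 * c₂) :=
  stmt12_general c₁ c₂ c₃ T₀ T₁ ε hc₁ hc₂ hc₃ hT₀ hT₁T₀ hε hεle A hA0 hAdiff hineq
end

section
/- Assume the zeroth-order profiles u₁⁰(x) = U x e^{Ux} q and v₁⁰(x) = e^{Ux}q + U(ln U)x e^{Ux}q + U²x²e^{Ux}q for x < 0, with u₁⁰ = 0 and v₁⁰ = q for x ≥ 0, where q is a constant (representing ψ⁰_ηη) and U ∈ (0,1). Then the jump condition [v₁⁰'](0) := v₁⁰'(0⁺) - v₁⁰'(0⁻) = -(1+ln U) u₁⁰'(0⁻) is automatically satisfied for every value of q. -/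
/-! Each profile is glued at `0` from branches that are smooth and agree there, so its one-sided
derivatives are those of the branches. Writing the left branches as quadratics times `exp (U x)`,
the left derivatives at `0` are `U q` for `u` and `U q + U (log U) q` for `v`, while `v` is
constant on the right; both sides of the jump condition are therefore `-(1 + log U) U q`. -/

open Set Real

section OneSidedDerivatives

variable {f g : ℝ → ℝ} {a f' g' : ℝ}

theorem derivWithin_Iio_ite (hf : HasDerivAt f f' a) (hfg : f a = g a) :
    derivWithin (fun x => if x < a then f x else g x) (Iio a) a = f' := by
  refine (hf.hasDerivWithinAt.congr (fun x hx => if_pos hx) ?_).derivWithin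
    (uniqueDiffWithinAt_Iio a)
  simp [hfg]

theorem derivWithin_Ici_ite (hg : HasDerivAt g g' a) :
    derivWithin (fun x => if x < a then f x else g x) (Ici a) a = g' :=
  (hg.hasDerivWithinAt.congr_of_mem (fun _ hx => if_neg (not_lt.mpr hx)) self_mem_Ici).derivWithin
    (uniqueDiffOn_Ici a a self_mem_Ici)

end OneSidedDerivatives

theorem hasDerivAt_quadratic_mul_exp_zero (U c₀ c₁ c₂ : ℝ) :
    HasDerivAt (fun x => (c₀ + c₁ * x + c₂ * x ^ 2) * exp (U * x)) (c₁ + U * c₀) 0 := by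
  have hpoly : HasDerivAt (fun x => c₀ + c₁ * x + c₂ * x ^ 2) c₁ 0 := by
    simpa using (((hasDerivAt_id' (0 : ℝ)).const_mul c₁).const_add c₀).fun_add
      (((hasDerivAt_id' (0 : ℝ)).pow 2).const_mul c₂)
  have hexp : HasDerivAt (fun x => exp (U * x)) U 0 := by
    simpa using ((hasDerivAt_id' (0 : ℝ)).const_mul U).exp
  exact (hpoly.fun_mul hexp).congr_deriv (by simp [mul_comm])

theorem stmt17_general (U : ℝ) (q : ℝ)
    (u v : ℝ → ℝ)
    (hu : u = fun x => if x < 0 then U * x * Real.exp (U * x) * q else 0)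
    (hv : v = fun x => if x < 0 then
        Real.exp (U * x) * q + U * Real.log U * x * Real.exp (U * x) * q
          + U ^ 2 * x ^ 2 * Real.exp (U * x) * q
      else q) :
    derivWithin v (Set.Ici 0) 0 - derivWithin v (Set.Iio 0) 0
      = -(1 + Real.log U) * derivWithin u (Set.Iio 0) 0 := by
  have hu_left : HasDerivAt (fun x => U * x * exp (U * x) * q) (U * q) 0 := by
    convert hasDerivAt_quadratic_mul_exp_zero U 0 (U * q) 0 using 1
    · funext x; ring
    · ring
  have hv_left : HasDerivAt (fun x => exp (U * x) * q + U * log U * x * exp (U * x) * q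
      + U ^ 2 * x ^ 2 * exp (U * x) * q) (U * log U * q + U * q) 0 := by
    convert hasDerivAt_quadratic_mul_exp_zero U q (U * log U * q) (U ^ 2 * q) using 1
    funext x; ring
  subst hu hv
  rw [derivWithin_Ici_ite (hasDerivAt_const 0 q), derivWithin_Iio_ite hv_left (by simp),
    derivWithin_Iio_ite hu_left (by simp)]
  ring

theorem stmt17 (U : ℝ) (hU : U ∈ Set.Ioo (0:ℝ) 1) (q : ℝ)
    (u v : ℝ → ℝ)
    (hu : u = fun x => if x < 0 then U * x * Real.exp (U * x) * q else 0)
    (hv : v = fun x => if x < 0 then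
        Real.exp (U * x) * q + U * Real.log U * x * Real.exp (U * x) * q
          + U ^ 2 * x ^ 2 * Real.exp (U * x) * q
      else q) :
    derivWithin v (Set.Ici 0) 0 - derivWithin v (Set.Iio 0) 0
      = -(1 + Real.log U) * derivWithin u (Set.Iio 0) 0 :=
  stmt17_general U q u v hu hv
end
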